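/- Let X be a real-valued random variable with unbounded distribution F and Y a random variable with P(Y=1)=P(Y=2)=1/2, and suppose (X,Y) follows an FGM distribution with parameter θ∈[−1,1]. Then for all x>0, P(XY>x) = (1/2)(F̄(x)+F̄(x/2)) + (θ/4)(F̄(x/2)−F̄(x)) − (θ/4)(F̄(x/2)²−F̄(x)²), and consequently P(XY>x) ~ (1/2)(F̄(x)+F̄(x/2)) + (θ/4)(F̄(x/2)−F̄(x)) as x→∞. -/

import Mathlib

open MeasureTheory ProbabilityTheory Filter Set Asymptotics

noncomputable section

/-- The tail (survival) function `x ↦ P(Z > x)` of a random variable `Z`. -/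
def rvTail {Ω : Type*} [MeasureSpace Ω] (Z : Ω → ℝ) (x : ℝ) : ℝ :=
  (ℙ {ω | x < Z ω}).toReal

/-- The cumulative distribution function `x ↦ P(Z ≤ x)` of a random variable `Z`. -/
def rvCdf {Ω : Type*} [MeasureSpace Ω] (Z : Ω → ℝ) (x : ℝ) : ℝ :=
  (ℙ {ω | Z ω ≤ x}).toReal

/-- The left limit of the cdf, `G(y-) = P(Z < y)`. -/
def rvCdfLeft {Ω : Type*} [MeasureSpace Ω] (Z : Ω → ℝ) (y : ℝ) : ℝ :=
  (ℙ {ω | Z ω < y}).toReal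

/-- The distribution of `Z` is unbounded (above): its tail is positive for every `x > 0`. -/
def UnboundedDist {Ω : Type*} [MeasureSpace Ω] (Z : Ω → ℝ) : Prop :=
  ∀ x > 0, 0 < rvTail Z x

/-- The support `D_Z = {y : P(Z ∈ (y - δ, y + δ)) > 0 for all δ > 0}` of the
distribution of `Z`. -/
def distSupport {Ω : Type*} [MeasureSpace Ω] (Z : Ω → ℝ) : Set ℝ :=
  {y | ∀ δ > 0, 0 < ℙ {ω | Z ω ∈ Ioo (y - δ) (y + δ)}}

/-- The distribution of `Z` belongs to the class `L(γ)`: it is unbounded above and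
`P(Z > x - t) ~ e^{γ t} P(Z > x)` as `x → ∞`, for every `t > 0`. -/
def MemLGamma {Ω : Type*} [MeasureSpace Ω] (Z : Ω → ℝ) (γ : ℝ) : Prop :=
  UnboundedDist Z ∧
    ∀ t > 0, (fun x => rvTail Z (x - t)) ~[atTop] (fun x => Real.exp (γ * t) * rvTail Z x)

/-- The tail of the two-fold convolution of the distribution of `Z` with itself. -/
def convSqTail {Ω : Type*} [MeasureSpace Ω] (Z : Ω → ℝ) (x : ℝ) : ℝ :=
  (((Measure.map Z ℙ).conv (Measure.map Z ℙ)) (Ioi x)).toReal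

/-- The distribution of `Z` belongs to the class `S(γ)`: it belongs to `L(γ)`, the
exponential moment `c = ∫ e^{γ y} dV(y)` is finite, and the tail of the two-fold
convolution satisfies `V̄*²(x) ~ 2 c V̄(x)` as `x → ∞`. -/
def MemSGamma {Ω : Type*} [MeasureSpace Ω] (Z : Ω → ℝ) (γ : ℝ) : Prop :=
  MemLGamma Z γ ∧
    Integrable (fun y => Real.exp (γ * y)) (Measure.map Z ℙ) ∧
    (fun x => convSqTail Z x) ~[atTop]
      (fun x => 2 * (∫ y, Real.exp (γ * y) ∂(Measure.map Z ℙ)) * rvTail Z x)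

open Classical in
/-- `γ / β_G`, where `β_G = sup {y : G(y) < 1}` is the right endpoint of the distribution
of `Z`, with the convention that `γ / β_G = 0` when `β_G = ∞`.
(Note that `G(y) < 1 ↔ P(Z > y) > 0`.) -/
def gammaOverBeta {Ω : Type*} [MeasureSpace Ω] (Z : Ω → ℝ) (γ : ℝ) : ℝ :=
  if BddAbove {y : ℝ | 0 < rvTail Z y} then γ / sSup {y : ℝ | 0 < rvTail Z y} else 0

/-- Assumption 2: `Ḡ(b x) = o(H̄(x))` as `x → ∞` for every constant `b > 0`, where `G` is
the distribution of `Y` and `H` is the distribution of the product `X Y`. -/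
def Assumption2 {Ω : Type*} [MeasureSpace Ω] (X Y : Ω → ℝ) : Prop :=
  ∀ b > 0, (fun x => rvTail Y (b * x)) =o[atTop] fun x => rvTail (fun ω => X ω * Y ω) x

/-- Assumption 1: `K x y` is the conditional probability `P(X > x | Y = y)`, namely for
`y` in the support of `Y` it is the limit of `P(X > x | Y ∈ (y - δ, y + δ])` as `δ → 0+`,
and for `y` outside the support it is the unconditional probability `P(X > x)` (and then
`h y = 1`); `h : [0,∞) → (0,∞)` is a measurable function such that
`P(X > x | Y = y) ~ h(y) P(X > x)` as `x → ∞`, uniformly for `y ≥ 0`. -/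
def Assumption1 {Ω : Type*} [MeasureSpace Ω] (X Y : Ω → ℝ) (h : ℝ → ℝ) (K : ℝ → ℝ → ℝ) :
    Prop :=
  Measurable h ∧ (∀ y, 0 ≤ y → 0 < h y) ∧
    (∀ y, y ∉ distSupport Y → h y = 1 ∧ ∀ x, K x y = rvTail X x) ∧
    (∀ y ∈ distSupport Y, ∀ x : ℝ,
      Tendsto
        (fun δ : ℝ => (ℙ {ω | x < X ω ∧ Y ω ∈ Ioc (y - δ) (y + δ)}).toReal /
          (ℙ {ω | Y ω ∈ Ioc (y - δ) (y + δ)}).toReal)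
        (nhdsWithin 0 (Ioi 0)) (nhds (K x y))) ∧
    ∀ ε > 0, ∀ᶠ x in atTop, ∀ y, 0 ≤ y → |K x y / (h y * rvTail X x) - 1| < ε

/-- `(X, Y)` follows a Farlie–Gumbel–Morgenstern (FGM) distribution with parameter
`θ ∈ [-1, 1]`: `P(X > x, Y > y) = F̄(x) Ḡ(y) (1 + θ F(x) G(y))` for all `x` in the
support of `X` and `y` in the support of `Y`. -/
def FGM {Ω : Type*} [MeasureSpace Ω] (X Y : Ω → ℝ) (θ : ℝ) : Prop :=
  θ ∈ Icc (-1 : ℝ) 1 ∧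
    ∀ x ∈ distSupport X, ∀ y ∈ distSupport Y,
      (ℙ {ω | x < X ω ∧ y < Y ω}).toReal =
        rvTail X x * rvTail Y y * (1 + θ * rvCdf X x * rvCdf Y y)

/-- `(X, Y)` follows a bivariate Sarmanov distribution with kernels `φ₁, φ₂` and
parameter `θ`: the joint law has density `1 + θ φ₁(x) φ₂(y)` with respect to the product
of the marginal laws, where `φ₁, φ₂` are measurable, `E φ₁(X) = E φ₂(Y) = 0` and
`1 + θ φ₁(x) φ₂(y) ≥ 0`. -/
def Sarmanov {Ω : Type*} [MeasureSpace Ω] (X Y : Ω → ℝ) (φ₁ φ₂ : ℝ → ℝ) (θ : ℝ) : Prop :=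
  Measurable φ₁ ∧ Measurable φ₂ ∧
    Integrable (fun ω => φ₁ (X ω)) ℙ ∧ Integrable (fun ω => φ₂ (Y ω)) ℙ ∧
    (∫ ω, φ₁ (X ω)) = 0 ∧ (∫ ω, φ₂ (Y ω)) = 0 ∧
    (∀ x y : ℝ, 0 ≤ y → 0 ≤ 1 + θ * φ₁ x * φ₂ y) ∧
    Measure.map (fun ω => (X ω, Y ω)) ℙ =
      ((Measure.map X ℙ).prod (Measure.map Y ℙ)).withDensity
        (fun p => ENNReal.ofReal (1 + θ * φ₁ p.1 * φ₂ p.2))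

/-- The condition `ψ(y) = lim_{δ → 0+} (∫_{y-δ}^{y+δ} φ₂(v) G(dv)) / (G(y+δ) - G(y-δ))`
for all `y` in the support of `Y`. -/
def SarmanovPsi {Ω : Type*} [MeasureSpace Ω] (Y : Ω → ℝ) (φ₂ ψ : ℝ → ℝ) : Prop :=
  ∀ y ∈ distSupport Y,
    Tendsto
      (fun δ : ℝ => (∫ v in Ioc (y - δ) (y + δ), φ₂ v ∂(Measure.map Y ℙ)) /
        (rvCdf Y (y + δ) - rvCdf Y (y - δ)))
      (nhdsWithin 0 (Ioi 0)) (nhds (ψ y))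


/-!
Almost surely `Y ∈ {1, 2}`, so `P(XY > x) = P(X > x) - J(x) + J(x / 2)` with
`J(s) = P(X > s, Y > 1)`. Since `X` has no mass strictly between a point and the largest
support point below it, the FGM identity at `y = 1` extends from the support of `X` to every `s`,
giving `J(s) = F̄(s) / 2 · (1 + θ F(s) / 2)`; with `F = 1 - F̄` this is the exact formula.
The correction `(θ / 4)(F̄(x/2)² - F̄(x)²)` is `O(F̄(x/2)²)`, the main term is at least
`F̄(x/2) / 4`, and `F̄(x/2) → 0`.
-/

open Topology

section Support

variable {Ω : Type*} [MeasureSpace Ω] {Z : Ω → ℝ}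

lemma distSupport_eq_support (hZ : Measurable Z) :
    distSupport Z = (Measure.map Z ℙ).support := by
  ext y
  rw [Metric.nhds_basis_ball.mem_measureSupport]
  refine forall₂_congr fun δ _ => ?_
  rw [Measure.map_apply hZ measurableSet_ball, Real.ball_eq_Ioo]
  rfl

lemma isClosed_distSupport (hZ : Measurable Z) : IsClosed (distSupport Z) :=
  distSupport_eq_support hZ ▸ Measure.isClosed_support

lemma ae_mem_distSupport (hZ : Measurable Z) : ∀ᵐ ω, Z ω ∈ distSupport Z := by
  rw [distSupport_eq_support hZ]
  exact ae_of_ae_map hZ.aemeasurable Measure.support_mem_ae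

lemma mem_distSupport_of_measure_pos {y : ℝ} (h : 0 < ℙ {ω | Z ω = y}) :
    y ∈ distSupport Z := fun δ hδ =>
  h.trans_le <| measure_mono fun ω (hω : Z ω = y) => by
    simp only [mem_ofPred_eq, mem_Ioo, hω]
    constructor <;> linarith

end Support

section Tail

variable {Ω : Type*} [MeasureSpace Ω] [IsProbabilityMeasure (ℙ : Measure Ω)] {Z : Ω → ℝ}

lemma rvCdf_eq_cdf_map (hZ : Measurable Z) (t : ℝ) : rvCdf Z t = cdf (Measure.map Z ℙ) t := by
  have := Measure.isProbabilityMeasure_map (μ := ℙ) hZ.aemeasurable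
  rw [cdf_eq_real, map_measureReal_apply hZ measurableSet_Iic]
  rfl

lemma rvCdf_eq_one_sub_rvTail (hZ : Measurable Z) (t : ℝ) : rvCdf Z t = 1 - rvTail Z t := by
  have hcompl : {ω | Z ω ≤ t} = {ω | t < Z ω}ᶜ := by
    ext ω
    simp
  rw [rvCdf, rvTail, hcompl, ← measureReal_def, ← measureReal_def,
    probReal_compl_eq_one_sub (measurableSet_lt measurable_const hZ)]

lemma rvTail_eq_one_sub_cdf_map (hZ : Measurable Z) (t : ℝ) :
    rvTail Z t = 1 - cdf (Measure.map Z ℙ) t := by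
  rw [← rvCdf_eq_cdf_map hZ, rvCdf_eq_one_sub_rvTail hZ, sub_sub_cancel]

lemma antitone_rvTail (hZ : Measurable Z) : Antitone (rvTail Z) := fun s t hst => by
  simp only [rvTail_eq_one_sub_cdf_map hZ]
  linarith [monotone_cdf (Measure.map Z ℙ) hst]

lemma tendsto_rvTail_atTop (hZ : Measurable Z) : Tendsto (rvTail Z) atTop (𝓝 0) := by
  have h := (tendsto_cdf_atTop (Measure.map Z ℙ)).const_sub 1
  rw [sub_self] at h
  simpa only [← rvTail_eq_one_sub_cdf_map hZ] using h

end Tail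

/-- The FGM identity, assumed only at support points of `X`, holds at every `t`: the tail
quantities at `t` agree with those at the largest support point `b ≤ t`, since `X` puts no
mass on `(b, t]`. -/
theorem FGM.measure_tail_inter_eq {Ω : Type*} [MeasureSpace Ω]
    [IsProbabilityMeasure (ℙ : Measure Ω)] {X Y : Ω → ℝ} {θ : ℝ} (hFGM : FGM X Y θ)
    (hX : Measurable X) {y : ℝ} (hy : y ∈ distSupport Y) (t : ℝ) :
    (ℙ {ω | t < X ω ∧ y < Y ω}).toReal =
      rvTail X t * rvTail Y y * (1 + θ * rvCdf X t * rvCdf Y y) := by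
  rw [rvCdf_eq_one_sub_rvTail hX t]
  rcases (distSupport X ∩ Iic t).eq_empty_or_nonempty with hempty | hne
  · have hlt : ∀ᵐ ω, t < X ω := by
      filter_upwards [ae_mem_distSupport hX] with ω hω
      by_contra! hle
      exact hempty.subset ⟨hω, hle⟩
    have htail : rvTail X t = 1 := by
      rw [rvTail, (prob_compl_eq_zero_iff (measurableSet_lt measurable_const hX)).mp hlt]
      rfl
    have hjoint : ℙ {ω | t < X ω ∧ y < Y ω} = ℙ {ω | y < Y ω} :=
      measure_congr (eventuallyEq_set.mpr (hlt.mono fun ω h => and_iff_right h))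
    rw [hjoint, htail]
    simp [rvTail]
  · have hbdd : BddAbove (distSupport X ∩ Iic t) := ⟨t, fun _ h => h.2⟩
    set b := sSup (distSupport X ∩ Iic t)
    have hb : b ∈ distSupport X ∩ Iic t :=
      ((isClosed_distSupport hX).inter isClosed_Iic).csSup_mem hne hbdd
    have hbt : ∀ᵐ ω, b < X ω ↔ t < X ω := by
      filter_upwards [ae_mem_distSupport hX] with ω hω
      refine ⟨fun hbω => ?_, hb.2.trans_lt⟩
      by_contra! hle
      exact (le_csSup hbdd ⟨hω, hle⟩).not_gt hbω
    have htail : rvTail X b = rvTail X t := by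
      unfold rvTail
      exact congrArg ENNReal.toReal (measure_congr (eventuallyEq_set.mpr hbt))
    have hjoint : ℙ {ω | b < X ω ∧ y < Y ω} = ℙ {ω | t < X ω ∧ y < Y ω} :=
      measure_congr (eventuallyEq_set.mpr (hbt.mono fun ω h => and_congr_left' h))
    rw [← hjoint, hFGM.2 b hb.1 y hy, rvCdf_eq_one_sub_rvTail hX b, htail]

section TwoPoint

variable {Ω : Type*} [MeasureSpace Ω] {X Y : Ω → ℝ} {a b : ℝ}

lemma ae_eq_or_eq_of_measure_add_eq_one [IsProbabilityMeasure (ℙ : Measure Ω)]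
    (hY : Measurable Y) (hab : a ≠ b) (h : ℙ {ω | Y ω = a} + ℙ {ω | Y ω = b} = 1) :
    ∀ᵐ ω, Y ω = a ∨ Y ω = b := by
  have hdisj : Disjoint {ω | Y ω = a} {ω | Y ω = b} :=
    disjoint_left.mpr fun ω (ha : Y ω = a) (hb : Y ω = b) => hab (ha.symm.trans hb)
  rw [ae_iff_prob_eq_one (hY.eq_const a |>.or (hY.eq_const b)), ofPred_or,
    measure_union hdisj (hY (measurableSet_singleton b)), h]

variable (hY2 : ∀ᵐ ω, Y ω = a ∨ Y ω = b) (hab : a < b)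
include hY2 hab

lemma measure_lt_eq_of_ae_eq_or_eq : ℙ {ω | a < Y ω} = ℙ {ω | Y ω = b} :=
  measure_congr <| eventuallyEq_set.mpr <| hY2.mono fun ω hω => by
    rcases hω with h | h <;> simp [h, hab, hab.ne]

lemma measure_le_eq_of_ae_eq_or_eq : ℙ {ω | Y ω ≤ a} = ℙ {ω | Y ω = a} :=
  measure_congr <| eventuallyEq_set.mpr <| hY2.mono fun ω hω => by
    rcases hω with h | h <;> simp [h, hab.ne', hab.not_ge]

lemma rvTail_mul_eq_of_ae_eq_or_eq [IsFiniteMeasure (ℙ : Measure Ω)] (hY : Measurable Y)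
    (ha : 0 < a) (x : ℝ) :
    rvTail (fun ω => X ω * Y ω) x =
      rvTail X (x / a) - (ℙ {ω | x / a < X ω ∧ a < Y ω}).toReal
        + (ℙ {ω | x / b < X ω ∧ a < Y ω}).toReal := by
  have hb : 0 < b := ha.trans hab
  have hsplit : ∀ E : Set Ω, ℙ (E ∩ {ω | a < Y ω}) + ℙ (E \ {ω | a < Y ω}) = ℙ E :=
    fun E => measure_inter_add_sdiff E (hY measurableSet_Ioi)
  have hlow : ({ω | x < X ω * Y ω} \ {ω | a < Y ω} : Set Ω) =ᵐ[ℙ]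
      ({ω | x / a < X ω} \ {ω | a < Y ω} : Set Ω) :=
    eventuallyEq_set.mpr <| hY2.mono fun ω hω => by
      rcases hω with h | h <;> simp [h, hab, div_lt_iff₀ ha]
  have hup : ({ω | x < X ω * Y ω} ∩ {ω | a < Y ω} : Set Ω) =ᵐ[ℙ]
      ({ω | x / b < X ω} ∩ {ω | a < Y ω} : Set Ω) :=
    eventuallyEq_set.mpr <| hY2.mono fun ω hω => by
      rcases hω with h | h <;> simp [h, hab, div_lt_iff₀ hb]
  have hsum : ℙ {ω | x < X ω * Y ω} + ℙ {ω | x / a < X ω ∧ a < Y ω} =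
      ℙ {ω | x / a < X ω} + ℙ {ω | x / b < X ω ∧ a < Y ω} := by
    rw [← hsplit {ω | x < X ω * Y ω}, ← hsplit {ω | x / a < X ω}, measure_congr hlow,
      measure_congr hup]
    simp only [ofPred_and]
    ring
  have hsumReal := congrArg ENNReal.toReal hsum
  rw [ENNReal.toReal_add (measure_ne_top _ _) (measure_ne_top _ _),
    ENNReal.toReal_add (measure_ne_top _ _) (measure_ne_top _ _)] at hsumReal
  rw [rvTail, rvTail]
  linarith

end TwoPoint

theorem FGM.rvTail_mul_of_two_point {Ω : Type*} [MeasureSpace Ω]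
    [IsProbabilityMeasure (ℙ : Measure Ω)] {X Y : Ω → ℝ} (hX : Measurable X) (hY : Measurable Y)
    (hY1 : ℙ {ω | Y ω = 1} = 1 / 2) (hY2 : ℙ {ω | Y ω = 2} = 1 / 2) {θ : ℝ} (hFGM : FGM X Y θ)
    (x : ℝ) :
    rvTail (fun ω => X ω * Y ω) x =
      (1 / 2) * (rvTail X x + rvTail X (x / 2)) + (θ / 4) * (rvTail X (x / 2) - rvTail X x)
        - (θ / 4) * ((rvTail X (x / 2)) ^ 2 - (rvTail X x) ^ 2) := by
  have hY12 : ∀ᵐ ω, Y ω = 1 ∨ Y ω = 2 :=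
    ae_eq_or_eq_of_measure_add_eq_one hY (by norm_num) (by rw [hY1, hY2, ENNReal.add_halves])
  have htailY : rvTail Y 1 = 1 / 2 := by
    rw [rvTail, measure_lt_eq_of_ae_eq_or_eq hY12 one_lt_two, hY2]
    norm_num
  have hcdfY : rvCdf Y 1 = 1 / 2 := by
    rw [rvCdf, measure_le_eq_of_ae_eq_or_eq hY12 one_lt_two, hY1]
    norm_num
  have hjoint : ∀ s, (ℙ {ω | s < X ω ∧ 1 < Y ω}).toReal =
      rvTail X s * (1 / 2) * (1 + θ * (1 - rvTail X s) * (1 / 2)) := fun s => by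
    have h1 : (1 : ℝ) ∈ distSupport Y := mem_distSupport_of_measure_pos (by simp [hY1])
    rw [hFGM.measure_tail_inter_eq hX h1, htailY, hcdfY, rvCdf_eq_one_sub_rvTail hX]
  rw [rvTail_mul_eq_of_ae_eq_or_eq hY12 one_lt_two hY one_pos, div_one, hjoint, hjoint]
  ring

lemma isEquivalent_sub_of_isBigO_sq {α : Type*} {l : Filter α} {u g e : α → ℝ}
    (hu : Tendsto u l (𝓝 0)) (hug : u =O[l] g) (he : e =O[l] fun x => u x ^ 2) :
    (fun x => g x - e x) ~[l] g := by
  have hsq : (fun x => u x ^ 2) =O[l] fun x => u x * g x := by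
    simpa only [sq] using (isBigO_refl u l).mul hug
  have hug_o : (fun x => u x * g x) =o[l] g := by
    simpa using ((isLittleO_one_iff ℝ).mpr hu).mul_isBigO (isBigO_refl g l)
  refine ((he.trans hsq).trans_isLittleO hug_o).neg_left.congr_left fun x => ?_
  simp

/-- For `0 ≤ v ≤ u` the main term is at least `u / 4` (worst case `θ = -1`, `v = 0`) and the
correction is at most `u² / 4`. -/
lemma isEquivalent_fgm_two_point {α : Type*} {l : Filter α} {u v : α → ℝ} {θ : ℝ}
    (hθ : θ ∈ Icc (-1 : ℝ) 1) (hvu : ∀ᶠ x in l, 0 ≤ v x ∧ v x ≤ u x) (hu : Tendsto u l (𝓝 0)) :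
    (fun x => (1 / 2) * (v x + u x) + (θ / 4) * (u x - v x) - (θ / 4) * (u x ^ 2 - v x ^ 2))
      ~[l] fun x => (1 / 2) * (v x + u x) + (θ / 4) * (u x - v x) := by
  obtain ⟨hθ₁, hθ₂⟩ := hθ
  refine isEquivalent_sub_of_isBigO_sq hu (IsBigO.of_bound 4 ?_) (IsBigO.of_bound 1 ?_)
  · filter_upwards [hvu] with x ⟨hv, hvu⟩
    rw [Real.norm_eq_abs, Real.norm_eq_abs, abs_of_nonneg (by linarith),
      abs_of_nonneg (by nlinarith)]
    nlinarith
  · filter_upwards [hvu] with x ⟨hv, hvu⟩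
    have hsq : 0 ≤ u x ^ 2 - v x ^ 2 := by nlinarith
    rw [Real.norm_eq_abs, norm_pow, Real.norm_eq_abs, sq_abs, one_mul, abs_le]
    constructor <;> nlinarith [mul_nonneg (sub_nonneg.2 hθ₂) hsq,
      mul_nonneg (neg_le_iff_add_nonneg.1 hθ₁) hsq]

theorem product_tail_fgm_two_point_general {Ω : Type*} [MeasureSpace Ω] [IsProbabilityMeasure (ℙ : Measure Ω)]
    (X Y : Ω → ℝ) (hXm : Measurable X) (hYm : Measurable Y)
    (hY1 : ℙ {ω | Y ω = 1} = 1 / 2) (hY2 : ℙ {ω | Y ω = 2} = 1 / 2)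
    (θ : ℝ) (hFGM : FGM X Y θ) :
    (∀ x > 0,
        rvTail (fun ω => X ω * Y ω) x =
          (1 / 2) * (rvTail X x + rvTail X (x / 2))
            + (θ / 4) * (rvTail X (x / 2) - rvTail X x)
            - (θ / 4) * ((rvTail X (x / 2)) ^ 2 - (rvTail X x) ^ 2)) ∧
      (fun x => rvTail (fun ω => X ω * Y ω) x) ~[atTop]
        (fun x => (1 / 2) * (rvTail X x + rvTail X (x / 2))
          + (θ / 4) * (rvTail X (x / 2) - rvTail X x)) := by
  have hpoint := hFGM.rvTail_mul_of_two_point hXm hYm hY1 hY2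
  refine ⟨fun x _ => hpoint x, ?_⟩
  have hbounds : ∀ᶠ x in atTop, 0 ≤ rvTail X x ∧ rvTail X x ≤ rvTail X (x / 2) :=
    (eventually_ge_atTop 0).mono fun x hx =>
      ⟨ENNReal.toReal_nonneg, antitone_rvTail hXm (by linarith)⟩
  have htail : Tendsto (fun x => rvTail X (x / 2)) atTop (𝓝 0) :=
    (tendsto_rvTail_atTop hXm).comp (tendsto_id.atTop_div_const two_pos)
  exact (isEquivalent_fgm_two_point hFGM.1 hbounds htail).congr_left
    (.of_eq (funext hpoint).symm)

theorem product_tail_fgm_two_point {Ω : Type*} [MeasureSpace Ω] [IsProbabilityMeasure (ℙ : Measure Ω)]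
    (X Y : Ω → ℝ) (hXm : Measurable X) (hYm : Measurable Y)
    (hFunb : UnboundedDist X)
    (hY1 : ℙ {ω | Y ω = 1} = 1 / 2) (hY2 : ℙ {ω | Y ω = 2} = 1 / 2)
    (θ : ℝ) (hFGM : FGM X Y θ) :
    (∀ x > 0,
        rvTail (fun ω => X ω * Y ω) x =
          (1 / 2) * (rvTail X x + rvTail X (x / 2))
            + (θ / 4) * (rvTail X (x / 2) - rvTail X x)
            - (θ / 4) * ((rvTail X (x / 2)) ^ 2 - (rvTail X x) ^ 2)) ∧
      (fun x => rvTail (fun ω => X ω * Y ω) x) ~[atTop]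
        (fun x => (1 / 2) * (rvTail X x + rvTail X (x / 2))
          + (θ / 4) * (rvTail X (x / 2) - rvTail X x)) :=
  product_tail_fgm_two_point_general X Y hXm hYm hY1 hY2 θ hFGM
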